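/- Every long root in a reduced crystallographic root system is a quantum root, i.e. satisfies ℓ(s_α) = ⟨α^∨, 2ρ⟩ − 1. In particular, in a simply laced root system every root is quantum. -/
import Mathlib


open Classical

/-- A reduced crystallographic root system with a chosen positive system,
inside a `ℚ`-vector space `V`.  `pairing α β` is `⟨α^∨, β⟩`. -/
structure RootSystemData (V : Type*) [AddCommGroup V] [Module ℚ V] where
  Φ : Set V
  finite : Φ.Finite
  pairing : V → Module.Dual ℚ V
  zero_not_mem : (0 : V) ∉ Φ
  neg_mem : ∀ α ∈ Φ, -α ∈ Φ
  pairing_self : ∀ α ∈ Φ, pairing α α = 2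
  pairing_int : ∀ α ∈ Φ, ∀ β ∈ Φ, ∃ n : ℤ, pairing α β = (n : ℚ)
  reflect_mem : ∀ α ∈ Φ, ∀ β ∈ Φ, β - pairing α β • α ∈ Φ
  reduced : ∀ α ∈ Φ, ∀ c : ℚ, c • α ∈ Φ → c = 1 ∨ c = -1
  pos : Set V
  pos_sub : pos ⊆ Φ
  mem_pos_or_neg : ∀ α ∈ Φ, α ∈ pos ∨ -α ∈ pos
  not_pos_and_neg : ∀ α ∈ pos, -α ∉ pos
  pos_add : ∀ α ∈ pos, ∀ β ∈ pos, α + β ∈ Φ → α + β ∈ pos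

namespace RootSystemData

variable {V : Type*} [AddCommGroup V] [Module ℚ V] (R : RootSystemData V)

/-- The reflection `s_α` as a linear endomorphism of `V`. -/
noncomputable def refl (α : V) : Module.End ℚ V := 1 - (R.pairing α).smulRight α

/-- Indicator function `Φ⁺` of the positive roots. -/
noncomputable def ind (β : V) : ℤ := if β ∈ R.pos then 1 else 0

/-- `2ρ`, the sum of the positive roots. -/
noncomputable def twoRho : V := ∑ᶠ α ∈ R.pos, α

/-- The length of a (Weyl group) element: the number of positive roots sent to
negative roots. -/
noncomputable def len (f : Module.End ℚ V) : ℕ := {α | α ∈ R.pos ∧ f α ∉ R.pos}.ncard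

/-- `f` belongs to the Weyl group, i.e. is a product of reflections. -/
def IsWeyl (f : Module.End ℚ V) : Prop :=
  f ∈ Submonoid.closure {g : Module.End ℚ V | ∃ α ∈ R.pos, g = R.refl α}

/-- A quantum root: `ℓ(s_α) = ⟨α^∨, 2ρ⟩ - 1`. -/
def IsQuantumRoot (α : V) : Prop :=
  α ∈ R.pos ∧ (R.len (R.refl α) : ℚ) = R.pairing α R.twoRho - 1

/-- Edges of the quantum Bruhat graph `QB(W)`, together with their weights:
a Bruhat edge `w → w s_α` of weight `0` when `ℓ(w s_α) = ℓ(w) + 1`, and a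
quantum edge of weight `α^∨` when `ℓ(w s_α) = ℓ(w) + 1 - ⟨α^∨, 2ρ⟩`. -/
def Edge (u v : Module.End ℚ V) (ω : Module.Dual ℚ V) : Prop :=
  ∃ α ∈ R.pos, v = u * R.refl α ∧
    ((R.len v = R.len u + 1 ∧ ω = 0) ∨
     ((R.len v : ℚ) = (R.len u : ℚ) + 1 - R.pairing α R.twoRho ∧ ω = R.pairing α))

/-- Paths in the quantum Bruhat graph; `Path R u v ω n` means there is a path
from `u` to `v` with `n` edges and total weight `ω`. -/
inductive Path (R : RootSystemData V) :
    Module.End ℚ V → Module.End ℚ V → Module.Dual ℚ V → ℕ → Prop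
  | nil (u : Module.End ℚ V) : Path R u u 0 0
  | cons {u v w : Module.End ℚ V} {ω' ω : Module.Dual ℚ V} {n : ℕ} :
      R.Edge u v ω' → Path R v w ω n → Path R u w (ω' + ω) (n + 1)

/-- `ω` is the weight `wt(u ⇒ v)` of a shortest path from `u` to `v` in `QB(W)`. -/
def IsWt (u v : Module.End ℚ V) (ω : Module.Dual ℚ V) : Prop :=
  ∃ n, R.Path u v ω n ∧ ∀ (m : ℕ) (ω' : Module.Dual ℚ V), R.Path u v ω' m → n ≤ m

/-- The distance `d(u ⇒ v)` in the quantum Bruhat graph. -/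
noncomputable def qbDist (u v : Module.End ℚ V) : ℕ :=
  sInf {n | ∃ ω, R.Path u v ω n}

/-- The cone of nonnegative integral sums of positive coroots; `μ ≤ ν` in the
coroot lattice iff `ν - μ` lies in this cone. -/
def corootCone : AddSubmonoid (Module.Dual ℚ V) :=
  AddSubmonoid.closure {d | ∃ α ∈ R.pos, d = R.pairing α}

/-- The coroot lattice `ℤΦ^∨`. -/
def corootLattice : AddSubgroup (Module.Dual ℚ V) :=
  AddSubgroup.closure {d | ∃ α ∈ R.pos, d = R.pairing α}


/-- `α` is a long root: no root pairs with `α^∨` with value `> 1` in absolute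
value, except `±α` themselves (equivalently `α` has maximal length in its
irreducible component). -/
def IsLong (α : V) : Prop :=
  α ∈ R.Φ ∧ ∀ β ∈ R.Φ, β ≠ α → β ≠ -α → |R.pairing α β| ≤ 1

lemma refl_apply' (α β : V) : R.refl α β = β - R.pairing α β • α := by
  simp [refl, LinearMap.sub_apply]

lemma pairing_refl' {α : V} (hα : α ∈ R.Φ) (β : V) :
    R.pairing α (R.refl α β) = - R.pairing α β := by
  rw [refl_apply', map_sub, map_smul, R.pairing_self α hα]
  simp; ring

lemma refl_refl' {α : V} (hα : α ∈ R.Φ) (β : V) :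
    R.refl α (R.refl α β) = β := by
  simp only [refl_apply', map_sub, map_smul, R.pairing_self α hα, smul_eq_mul]
  module

/-- Every long (positive) root is a quantum root; in particular in a simply
laced root system every positive root is quantum. -/
theorem isQuantumRoot_of_isLong :
    (∀ α ∈ R.pos, R.IsLong α → R.IsQuantumRoot α) ∧
    ((∀ α ∈ R.Φ, ∀ β ∈ R.Φ, β ≠ α → β ≠ -α → |R.pairing α β| ≤ 1) →
      ∀ α ∈ R.pos, R.IsQuantumRoot α) := by
  have main : ∀ α ∈ R.pos, R.IsLong α → R.IsQuantumRoot α := by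
    intro α hα hlong
    obtain ⟨hαΦ, hL⟩ := hlong
    have hα0 : α ≠ 0 := fun h => R.zero_not_mem (h ▸ hαΦ)
    have hnegα : -α ∉ R.pos := R.not_pos_and_neg α hα
    have hfin : R.pos.Finite := R.finite.subset R.pos_sub
    set S : Finset V := hfin.toFinset with hS
    have hScoe : (S : Set V) = R.pos := hfin.coe_toFinset
    -- the inversion set
    set Nset : Set V := {β | β ∈ R.pos ∧ R.refl α β ∉ R.pos} with hNset
    have hNsub : Nset ⊆ R.pos := fun β hβ => hβ.1
    have hNfin : Nset.Finite := hfin.subset hNsub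
    set NF : Finset V := hNfin.toFinset with hNF
    have hNcoe : (NF : Set V) = Nset := hNfin.coe_toFinset
    have hNFS : NF ⊆ S := by
      intro β hβ
      have : β ∈ Nset := by rwa [← hNcoe]
      simp only [hS, Set.Finite.mem_toFinset]; exact hNsub this
    -- key: for β in the inversion set, β ≠ α, the pairing is 1
    have hkey : ∀ β ∈ NF, β ≠ α → R.pairing α β = 1 := by
      intro β hβ hne
      have hβN : β ∈ Nset := by rwa [← hNcoe]
      obtain ⟨hβpos, hβrefl⟩ := hβN
      have hβΦ : β ∈ R.Φ := R.pos_sub hβpos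
      have hne' : β ≠ -α := by
        rintro rfl; exact hnegα hβpos
      obtain ⟨n, hn⟩ := R.pairing_int α hαΦ β hβΦ
      have habs : |R.pairing α β| ≤ 1 := hL β hβΦ hne hne'
      rw [hn] at habs
      have hnabs : |n| ≤ 1 := by exact_mod_cast habs
      obtain ⟨hlo, hhi⟩ := abs_le.mp hnabs
      interval_cases n
      · -- n = -1 : refl α β = β + α is positive, contradiction
        exfalso
        have hval : R.refl α β = β + α := by
          rw [refl_apply', hn]; push_cast; simp
        have hmem : β + α ∈ R.Φ := by
          have := R.reflect_mem α hαΦ β hβΦ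
          rw [hn] at this; push_cast at this
          simpa using this
        have hmempos : β + α ∈ R.pos := by
          rcases R.mem_pos_or_neg _ hmem with h | h
          · exact h
          · exfalso
            have h2 : -(β + α) + β ∈ R.pos := by
              apply R.pos_add _ h _ hβpos
              have : -(β + α) + β = -α := by abel
              rw [this]; exact R.neg_mem α hαΦ
            have : -(β + α) + β = -α := by abel
            rw [this] at h2
            exact hnegα h2
        rw [hval] at hβrefl
        exact hβrefl hmempos
      · -- n = 0 : refl α β = β is positive, contradiction
        exfalso
        have hval : R.refl α β = β := by
          rw [refl_apply', hn]; push_cast; simp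
        rw [hval] at hβrefl
        exact hβrefl hβpos
      · rw [hn]; norm_num
    have hαNset : α ∈ Nset := by
      refine ⟨hα, ?_⟩
      have : R.refl α α = -α := by
        rw [refl_apply', R.pairing_self α hαΦ]
        rw [two_smul]; abel
      rw [this]; exact hnegα
    have hαNF : α ∈ NF := by rw [← hNcoe] at hαNset; exact hαNset
    have hcard1 : 1 ≤ NF.card := Finset.card_pos.mpr ⟨α, hαNF⟩
    -- len computation
    have hlen : R.len (R.refl α) = NF.card := by
      rw [len, Set.ncard_eq_toFinset_card _ hNfin]
    -- pairing with 2ρ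
    have htwoRho : R.pairing α R.twoRho = ∑ β ∈ S, R.pairing α β := by
      rw [twoRho, ← hScoe, finsum_mem_coe_finset, map_sum]
    -- sum over non-inverted part vanishes
    have hzero : ∑ β ∈ S \ NF, R.pairing α β = 0 := by
      have g_mem : ∀ β ∈ S \ NF, R.refl α β ∈ S \ NF := by
        intro β hβ
        rw [Finset.mem_sdiff] at hβ
        obtain ⟨hβS, hβN⟩ := hβ
        have hβpos : β ∈ R.pos := by rwa [hS, Set.Finite.mem_toFinset] at hβS
        have hβnotN : β ∉ Nset := fun hh => hβN (hNfin.mem_toFinset.mpr hh)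
        have hrpos : R.refl α β ∈ R.pos := by
          by_contra h
          exact hβnotN ⟨hβpos, h⟩
        rw [Finset.mem_sdiff]
        constructor
        · rwa [hS, Set.Finite.mem_toFinset]
        · intro h
          have : R.refl α β ∈ Nset := by rwa [← hNcoe]
          exact this.2 (by rwa [refl_refl' R hαΦ β])
      refine Finset.sum_involution (fun β _ => R.refl α β) ?_ ?_ g_mem ?_
      · intro β _
        rw [pairing_refl' R hαΦ]; ring
      · intro β _ hfβ h
        apply hfβ
        have heq : β - R.pairing α β • α = β := by
          rw [← refl_apply']; exact h
        have h0 : R.pairing α β • α = 0 := by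
          rwa [sub_eq_self] at heq
        rcases smul_eq_zero.mp h0 with h1 | h2
        · exact h1
        · exact absurd h2 hα0
      · intro β _
        exact refl_refl' R hαΦ β
    -- sum over inversion set
    have hNsum : ∑ β ∈ NF, R.pairing α β = (NF.card : ℚ) + 1 := by
      rw [← Finset.add_sum_erase _ _ hαNF, R.pairing_self α hαΦ]
      rw [Finset.sum_congr rfl (fun β hβ => hkey β (Finset.mem_of_mem_erase hβ)
        (Finset.ne_of_mem_erase hβ))]
      rw [Finset.sum_const, Finset.card_erase_of_mem hαNF]
      have : ((NF.card - 1 : ℕ) : ℚ) = (NF.card : ℚ) - 1 := by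
        push_cast [Nat.cast_sub hcard1]; ring
      rw [nsmul_eq_mul, this]; ring
    -- combine
    refine ⟨hα, ?_⟩
    have hsplit : ∑ β ∈ S, R.pairing α β
        = ∑ β ∈ S \ NF, R.pairing α β + ∑ β ∈ NF, R.pairing α β :=
      (Finset.sum_sdiff hNFS).symm
    rw [hlen, htwoRho, hsplit, hzero, hNsum]; ring
  refine ⟨main, fun h α hα => main α hα ⟨R.pos_sub hα, h α (R.pos_sub hα)⟩⟩
end RootSystemData
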